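/- Every normal set A ⊆ ℕ contains elements u, v with u > v such that u² − v² is a perfect square. -/

import Mathlib

/-!
For `a ≥ 1` the dilate `{z | a * z ∈ A}` of a normal set `A` has density `1/2`. Normality makes
the discrepancy of `A` along a `K`-term progression of difference `a` have mean square `K/4` over
all starting points, hence at most `a K` over starting points divisible by `a`; Cauchy–Schwarz
and a sliding-window count turn this into `|#{z ≤ M | a z ∈ A} - M/2| ≤ K + M √(a/K)`.

Since `185² - 153² = 104²`, `697² - 153² = 680²` and `697² - 185² = 672²`, a set without the
required pair has pairwise disjoint dilates by `153`, `185` and `697` (away from `0`), which three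
sets of density `1/2` cannot be.
-/

open scoped Classical

/-- A set of natural numbers is *normal* if every nonempty binary word `w` occurs
in the indicator sequence of `A` (read off at positions 1, 2, 3, ...) with
asymptotic frequency `2 ^ (-|w|)`. -/
def IsNormalSet (A : Set ℕ) : Prop :=
  ∀ w : List Bool, w ≠ [] →
    Filter.Tendsto
      (fun N : ℕ =>
        (((Finset.Icc 1 N).filter fun n =>
            ∀ i : Fin w.length, (n + (i : ℕ) ∈ A ↔ w.get i = true)).card : ℝ) / N)
      Filter.atTop (nhds (1 / 2 ^ w.length))

/-- `S` has natural density `d`. -/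
def HasDensity (S : Set ℕ) (d : ℝ) : Prop :=
  Filter.Tendsto
    (fun N : ℕ => (((Finset.Icc 1 N).filter fun n => n ∈ S).card : ℝ) / N)
    Filter.atTop (nhds d)

open Finset Filter Topology

noncomputable def blockAt (A : Set ℕ) (L n : ℕ) : Fin L → Bool := fun i => decide (n + (i : ℕ) ∈ A)

namespace IsNormalSet

variable {A : Set ℕ}

theorem tendsto_freq_blockAt (hA : IsNormalSet A) {L : ℕ} (hL : 0 < L) (w : Fin L → Bool) :
    Tendsto (fun N : ℕ => (#{n ∈ Icc 1 N | blockAt A L n = w} : ℝ) / N)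
      atTop (𝓝 (1 / 2 ^ L)) := by
  have hw : List.ofFn w ≠ [] := by rw [Ne, List.ofFn_eq_nil_iff]; omega
  convert hA _ hw using 5 with N
  · simp only [blockAt, funext_iff, Fin.forall_iff, List.get_ofFn, List.length_ofFn]
    congr! 5 with n - i hi
    cases h : w ⟨i, hi⟩ <;> simp [h]
  · rw [List.length_ofFn]

theorem tendsto_average_blockAt (hA : IsNormalSet A) {L : ℕ} (hL : 0 < L)
    (φ : (Fin L → Bool) → ℝ) :
    Tendsto (fun N : ℕ => (∑ n ∈ Icc 1 N, φ (blockAt A L n)) / N)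
      atTop (𝓝 ((∑ w, φ w) / 2 ^ L)) := by
  have hsplit (N : ℕ) : (∑ n ∈ Icc 1 N, φ (blockAt A L n)) / N
      = ∑ w, φ w * ((#{n ∈ Icc 1 N | blockAt A L n = w} : ℝ) / N) := by
    rw [← sum_fiberwise (Icc 1 N) (blockAt A L), sum_div]
    refine sum_congr rfl fun w _ => ?_
    rw [sum_congr rfl fun n hn => congrArg φ (mem_filter.1 hn).2, sum_const, nsmul_eq_mul]
    ring
  convert tendsto_finsetSum univ fun w _ => (hA.tendsto_freq_blockAt hL w).const_mul (φ w) using 1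
  · exact funext hsplit
  · simp_rw [sum_div, mul_one_div]

end IsNormalSet

noncomputable def centeredBit (b : Bool) : ℝ := if b then 1 / 2 else -1 / 2

theorem centeredBit_not (b : Bool) : centeredBit (!b) = -centeredBit b := by
  cases b <;> norm_num [centeredBit]

theorem centeredBit_mul_self (b : Bool) : centeredBit b * centeredBit b = 1 / 4 := by
  cases b <;> norm_num [centeredBit]

section BooleanCube

variable {ι κ : Type*} [Fintype ι] [DecidableEq ι] [Fintype κ]

theorem sum_centeredBit_mul_centeredBit (p q : ι) :
    ∑ u : ι → Bool, centeredBit (u p) * centeredBit (u q) =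
      if p = q then 2 ^ Fintype.card ι / 4 else 0 := by
  split_ifs with hpq
  · simp only [hpq, centeredBit_mul_self, sum_const, card_univ, Fintype.card_pi,
      Fintype.card_bool, prod_const, nsmul_eq_mul]
    push_cast
    ring
  -- flipping the bit at `p` negates every summand
  have hflip : Function.Involutive fun u : ι → Bool => Function.update u p (!u p) := fun u => by
    simp
  have := Equiv.sum_comp (hflip.toPerm _) fun u => centeredBit (u p) * centeredBit (u q)
  simp only [Function.Involutive.coe_toPerm, Function.update_self, centeredBit_not,
    Function.update_of_ne (Ne.symm hpq), neg_mul, sum_neg_distrib] at this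
  linarith

theorem sum_sq_sum_centeredBit {e : κ → ι} (he : Function.Injective e) :
    ∑ u : ι → Bool, (∑ j, centeredBit (u (e j))) ^ 2 =
      2 ^ Fintype.card ι * Fintype.card κ / 4 := by
  calc ∑ u : ι → Bool, (∑ j, centeredBit (u (e j))) ^ 2
      = ∑ j, ∑ k, ∑ u : ι → Bool, centeredBit (u (e j)) * centeredBit (u (e k)) := by
        simp_rw [sq, sum_mul_sum]
        rw [sum_comm]
        exact sum_congr rfl fun j _ => sum_comm
    _ = 2 ^ Fintype.card ι * Fintype.card κ / 4 := by
        simp only [sum_centeredBit_mul_centeredBit, he.eq_iff, sum_ite_eq, mem_univ, if_true,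
          sum_const, card_univ, nsmul_eq_mul]
        ring

end BooleanCube

theorem centeredBit_decide (p : Prop) [Decidable p] :
    centeredBit (decide p) = (if p then 1 else 0) - 1 / 2 := by
  by_cases hp : p <;> norm_num [centeredBit, hp]

section SlidingWindows

variable {f : ℕ → ℝ}

theorem abs_sum_range_shift_sub_le (hf0 : ∀ n, 0 ≤ f n) (hf1 : ∀ n, f n ≤ 1) (j M : ℕ) :
    |∑ m ∈ range M, f (j + m) - ∑ m ∈ range M, f m| ≤ j := by
  have hsplit : ∑ m ∈ range M, f (j + m) - ∑ m ∈ range M, f m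
      = ∑ x ∈ range j, f (M + x) - ∑ x ∈ range j, f x := by
    have h₁ := sum_range_add f j M
    have h₂ := sum_range_add f M j
    rw [add_comm j M] at h₁
    linarith
  have hbound (g : ℕ → ℝ) (hg0 : ∀ n, 0 ≤ g n) (hg1 : ∀ n, g n ≤ 1) :
      0 ≤ ∑ x ∈ range j, g x ∧ ∑ x ∈ range j, g x ≤ j := by
    refine ⟨sum_nonneg fun x _ => hg0 x, ?_⟩
    simpa using sum_le_card_nsmul (range j) g 1 fun x _ => hg1 x
  rw [hsplit]
  exact abs_sub_le_of_nonneg_of_le (hbound _ (fun _ => hf0 _) fun _ => hf1 _).1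
    (hbound _ (fun _ => hf0 _) fun _ => hf1 _).2 (hbound f hf0 hf1).1 (hbound f hf0 hf1).2

theorem abs_sum_windows_sub_le (hf0 : ∀ n, 0 ≤ f n) (hf1 : ∀ n, f n ≤ 1) (K M : ℕ) :
    |∑ m ∈ range M, ∑ j ∈ range K, f (j + m) - K * ∑ m ∈ range M, f m| ≤ K ^ 2 := by
  have hswap : ∑ m ∈ range M, ∑ j ∈ range K, f (j + m) - K * ∑ m ∈ range M, f m
      = ∑ j ∈ range K, (∑ m ∈ range M, f (j + m) - ∑ m ∈ range M, f m) := by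
    rw [sum_comm, sum_sub_distrib, sum_const, card_range, nsmul_eq_mul]
  rw [hswap]
  calc |∑ j ∈ range K, (∑ m ∈ range M, f (j + m) - ∑ m ∈ range M, f m)|
      ≤ ∑ j ∈ range K, (j : ℝ) :=
        (abs_sum_le_sum_abs _ _).trans
          (sum_le_sum fun j _ => abs_sum_range_shift_sub_le hf0 hf1 j M)
    _ ≤ ∑ j ∈ range K, (K : ℝ) := sum_le_sum fun j hj => by exact_mod_cast (mem_range.1 hj).le
    _ = K ^ 2 := by simp [sq]

end SlidingWindows

noncomputable def apDiscrepancy (A : Set ℕ) (a K n : ℕ) : ℝ :=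
  ∑ j : Fin K, centeredBit (decide (n + a * j ∈ A))

namespace IsNormalSet

variable {A : Set ℕ} {a : ℕ}

theorem tendsto_sum_apDiscrepancy_sq (hA : IsNormalSet A) (ha : 0 < a) (K : ℕ) :
    Tendsto (fun N : ℕ => (∑ n ∈ Icc 1 N, apDiscrepancy A a K n ^ 2) / N) atTop (𝓝 (K / 4)) := by
  let e : Fin K → Fin (a * K + 1) := fun j => ⟨a * j, by nlinarith [j.isLt]⟩
  have he : Function.Injective e := fun j k hjk =>
    Fin.ext (Nat.eq_of_mul_eq_mul_left ha (Fin.mk.inj_iff.1 hjk))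
  have := hA.tendsto_average_blockAt (Nat.succ_pos _) fun w => (∑ j, centeredBit (w (e j))) ^ 2
  rw [sum_sq_sum_centeredBit he, Fintype.card_fin, Fintype.card_fin, mul_div_assoc,
    mul_div_cancel_left₀ _ (by positivity)] at this
  exact this

theorem eventually_sq_sum_apDiscrepancy_le (hA : IsNormalSet A) (ha : 0 < a) {K : ℕ}
    (hK : 0 < K) :
    ∀ᶠ M : ℕ in atTop,
      (∑ m ∈ range M, apDiscrepancy A a K (a * (m + 1))) ^ 2 ≤ a * K * M ^ 2 := by
  have hlt : (K : ℝ) / 4 < K := by linarith [(Nat.cast_pos.2 hK : (0 : ℝ) < K)]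
  have hsecond : ∀ᶠ N : ℕ in atTop, ∑ n ∈ Icc 1 N, apDiscrepancy A a K n ^ 2 ≤ N * K := by
    filter_upwards [(hA.tendsto_sum_apDiscrepancy_sq ha K).eventually_lt_const hlt,
      eventually_gt_atTop 0] with N hN hN0
    rw [div_lt_iff₀ (by exact_mod_cast hN0)] at hN
    linarith
  have hsub (M : ℕ) : ∑ m ∈ range M, apDiscrepancy A a K (a * (m + 1)) ^ 2
      ≤ ∑ n ∈ Icc 1 (a * M), apDiscrepancy A a K n ^ 2 := by
    rw [← sum_image (f := fun n => apDiscrepancy A a K n ^ 2) (g := fun m => a * (m + 1))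
      fun x _ y _ h => by simpa using Nat.eq_of_mul_eq_mul_left ha h]
    refine sum_le_sum_of_subset_of_nonneg (fun n hn => ?_) fun _ _ _ => sq_nonneg _
    obtain ⟨m, hm, rfl⟩ := mem_image.1 hn
    rw [mem_Icc]
    constructor <;> nlinarith [mem_range.1 hm]
  filter_upwards [(tendsto_id.const_mul_atTop' ha).eventually hsecond] with M hM
  calc (∑ m ∈ range M, apDiscrepancy A a K (a * (m + 1))) ^ 2
      ≤ M * ∑ m ∈ range M, apDiscrepancy A a K (a * (m + 1)) ^ 2 := by
        simpa using sq_sum_le_card_mul_sum_sq (s := range M)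
          (f := fun m => apDiscrepancy A a K (a * (m + 1)))
    _ ≤ M * ((a * M : ℕ) * K) := by gcongr; exact (hsub M).trans hM
    _ = a * K * M ^ 2 := by push_cast; ring

theorem abs_card_dilate_sub_le (hA : IsNormalSet A) (ha : 0 < a) {K : ℕ} (hK : 0 < K) :
    ∀ᶠ M : ℕ in atTop, |(#{z ∈ Icc 1 M | a * z ∈ A} : ℝ) - M / 2| ≤ K + √(a / K) * M := by
  set f : ℕ → ℝ := fun z => if a * (z + 1) ∈ A then 1 else 0 with hf
  have hf0 (z : ℕ) : 0 ≤ f z := by simp only [hf]; split_ifs <;> norm_num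
  have hf1 (z : ℕ) : f z ≤ 1 := by simp only [hf]; split_ifs <;> norm_num
  have hcount (M : ℕ) : (#{z ∈ Icc 1 M | a * z ∈ A} : ℝ) = ∑ m ∈ range M, f m := by
    rw [natCast_card_filter, ← Ico_add_one_right_eq_Icc, sum_Ico_eq_sum_range]
    simp only [add_tsub_cancel_right, add_comm, sum_boole, hf]
  have hwindow (m : ℕ) :
      apDiscrepancy A a K (a * (m + 1)) = ∑ j ∈ range K, f (j + m) - K / 2 := by
    rw [apDiscrepancy,
      Fin.sum_univ_eq_sum_range (fun j => centeredBit (decide (a * (m + 1) + a * j ∈ A)))]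
    simp only [centeredBit_decide, sum_sub_distrib, sum_const, card_range, nsmul_eq_mul, hf]
    congr 1
    · refine sum_congr rfl fun j _ => ?_
      rw [show a * (m + 1) + a * j = a * (j + m + 1) by ring]
    · ring
  have hKpos : (0 : ℝ) < K := by exact_mod_cast hK
  filter_upwards [hA.eventually_sq_sum_apDiscrepancy_le ha hK] with M hM
  set E := ∑ m ∈ range M, apDiscrepancy A a K (a * (m + 1))
  have hE : |E| ≤ K * (√(a / K) * M) := by
    refine abs_le_of_sq_le_sq (hM.trans_eq ?_) (by positivity)
    rw [mul_pow, mul_pow, Real.sq_sqrt (by positivity)]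
    field_simp
  have hsum : ∑ m ∈ range M, ∑ j ∈ range K, f (j + m) = E + K * M / 2 := by
    simp only [E, hwindow, sum_sub_distrib, sum_const, card_range, nsmul_eq_mul]
    ring
  have hdouble := abs_sum_windows_sub_le hf0 hf1 K M
  rw [hsum, ← hcount] at hdouble
  refine le_of_mul_le_mul_left ?_ hKpos
  calc (K : ℝ) * |(#{z ∈ Icc 1 M | a * z ∈ A} : ℝ) - M / 2|
      = |K * ((#{z ∈ Icc 1 M | a * z ∈ A} : ℝ) - M / 2)| := by rw [abs_mul, abs_of_pos hKpos]
    _ = |E - (E + K * M / 2 - K * #{z ∈ Icc 1 M | a * z ∈ A})| := by ring_nf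
    _ ≤ |E| + |E + K * M / 2 - K * #{z ∈ Icc 1 M | a * z ∈ A}| := abs_sub _ _
    _ ≤ K * (√(a / K) * M) + K ^ 2 := add_le_add hE hdouble
    _ = K * (K + √(a / K) * M) := by ring

theorem hasDensity_dilate (hA : IsNormalSet A) (ha : 0 < a) :
    HasDensity {z | a * z ∈ A} (1 / 2) := by
  refine Metric.tendsto_atTop.2 fun ε hε => ?_
  obtain ⟨K, hK⟩ : ∃ K : ℕ, 4 * a / ε ^ 2 < K := exists_nat_gt _
  have hKpos : (0 : ℝ) < K := lt_of_le_of_lt (by positivity) hK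
  have hsqrt : √(a / K) < ε / 2 := by
    rw [Real.sqrt_lt' (by positivity), div_lt_iff₀ hKpos]
    rw [div_lt_iff₀ (by positivity)] at hK
    linarith
  obtain ⟨M₀, hM₀⟩ := eventually_atTop.1 <|
    (hA.abs_card_dilate_sub_le ha (Nat.cast_pos.1 hKpos)).and
      (tendsto_natCast_atTop_atTop.eventually_gt_atTop (2 * K / ε))
  refine ⟨M₀, fun M hM => ?_⟩
  obtain ⟨hdev, hlarge⟩ := hM₀ M hM
  have hMpos : (0 : ℝ) < M := lt_of_le_of_lt (by positivity) hlarge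
  rw [div_lt_iff₀ hε] at hlarge
  simp only [Set.mem_ofPred_eq, Real.dist_eq]
  rw [show (#{z ∈ Icc 1 M | a * z ∈ A} : ℝ) / M - 1 / 2
    = ((#{z ∈ Icc 1 M | a * z ∈ A} : ℝ) - M / 2) / M by field_simp, abs_div,
    abs_of_pos hMpos, div_lt_iff₀ hMpos]
  nlinarith

end IsNormalSet

namespace HasDensity

theorem diff_singleton_zero {S : Set ℕ} {d : ℝ} (h : HasDensity S d) :
    HasDensity (S \ {0}) d := by
  refine h.congr fun N => ?_
  congr 2
  refine congrArg card (Finset.ext fun n => ?_)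
  simp only [mem_filter, mem_Icc, Set.mem_sdiff, Set.mem_singleton_iff]
  exact ⟨fun ⟨hn, hS⟩ => ⟨hn, hS, by omega⟩, fun ⟨hn, hS, _⟩ => ⟨hn, hS⟩⟩

theorem sum_le_one {ι : Type*} [Fintype ι] {S : ι → Set ℕ} {d : ι → ℝ}
    (h : ∀ i, HasDensity (S i) (d i)) (hS : Pairwise fun i j => Disjoint (S i) (S j)) :
    ∑ i, d i ≤ 1 := by
  refine le_of_tendsto (tendsto_finsetSum univ fun i _ => h i) <|
    (eventually_gt_atTop 0).mono fun N hN => ?_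
  rw [← sum_div, div_le_one (by exact_mod_cast hN)]
  have hdisj : ((univ : Finset ι) : Set ι).PairwiseDisjoint fun i => {n ∈ Icc 1 N | n ∈ S i} :=
    fun i _ j _ hij => disjoint_filter.2 fun n _ hi hj => Set.disjoint_left.1 (hS hij) hi hj
  have hcard := card_le_card (biUnion_subset.2 fun i (_ : i ∈ univ) =>
    filter_subset (· ∈ S i) (Icc 1 N))
  rw [card_biUnion hdisj, Nat.card_Icc, Nat.add_sub_cancel] at hcard
  exact_mod_cast hcard

end HasDensity

theorem exists_sq_sub_sq_isSquare_of_mul_mem {A : Set ℕ} {a b c z : ℕ} (hab : a < b)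
    (habc : a ^ 2 + c ^ 2 = b ^ 2) (hz : z ≠ 0) (ha : a * z ∈ A) (hb : b * z ∈ A) :
    ∃ u ∈ A, ∃ v ∈ A, v < u ∧ IsSquare (u ^ 2 - v ^ 2) := by
  refine ⟨b * z, hb, a * z, ha, Nat.mul_lt_mul_of_pos_right hab (Nat.pos_of_ne_zero hz), c * z, ?_⟩
  refine Nat.sub_eq_of_eq_add' ?_
  rw [← sq, mul_pow, mul_pow, mul_pow, ← habc]
  ring

theorem normal_set_difference_of_squares (A : Set ℕ) (hA : IsNormalSet A) :
    ∃ u ∈ A, ∃ v ∈ A, v < u ∧ IsSquare (u ^ 2 - v ^ 2) := by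
  by_contra hnone
  let S : Fin 3 → Set ℕ := fun i => {z | ![153, 185, 697] i * z ∈ A} \ {0}
  have hdensity (i : Fin 3) : HasDensity (S i) (1 / 2) :=
    (hA.hasDensity_dilate (by fin_cases i <;> decide)).diff_singleton_zero
  have hdisj : Pairwise fun i j => Disjoint (S i) (S j) := by
    have key {a b c : ℕ} (hab : a < b) (habc : a ^ 2 + c ^ 2 = b ^ 2) :
        Disjoint ({z | a * z ∈ A} \ {0}) ({z | b * z ∈ A} \ {0}) :=
      Set.disjoint_left.2 fun z ha hb =>
        hnone (exists_sq_sub_sq_isSquare_of_mul_mem hab habc ha.2 ha.1 hb.1)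
    have h₁ := key (a := 153) (b := 185) (c := 104) (by norm_num) (by norm_num)
    have h₂ := key (a := 153) (b := 697) (c := 680) (by norm_num) (by norm_num)
    have h₃ := key (a := 185) (b := 697) (c := 672) (by norm_num) (by norm_num)
    intro i j hij
    fin_cases i <;> fin_cases j <;> simp_all [S, disjoint_comm]
  have := HasDensity.sum_le_one hdensity hdisj
  norm_num at this
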